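/- Let m^(n), m ∈ ℓ^∞ with ‖m^(n) − m‖_{p₁} → 0, and let Λ^(n), Λ be pg-Bessel sequences for X₂ with uniformly bounded Bessel bounds B₁ = sup_n B_{Λ^(n)} < ∞, and Θ^(n), Θ qg-Bessel sequences for X₁^* with B₂ = sup_n B_{Θ^(n)} < ∞. If m ∈ ℓ^{p₁}, (Σ_i ‖Λ^(n)_i − Λ_i‖^{q₁})^{1/q₁} → 0 and (Σ_i ‖Θ^(n)_i − Θ_i‖^{q₁})^{1/q₁} → 0, then ‖M_{m^(n),Λ^(n),Θ^(n)} − M_{m,Λ,Θ}‖ → 0. -/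

import Mathlib

open NormedSpace Filter

/-- The Banach-space adjoint (dual map) of a continuous linear map. -/
noncomputable def opAdj {X Y : Type*} [NormedAddCommGroup X] [NormedSpace ℝ X]
    [NormedAddCommGroup Y] [NormedSpace ℝ Y] (T : X →L[ℝ] Y) :
    StrongDual ℝ Y →L[ℝ] StrongDual ℝ X :=
  (ContinuousLinearMap.compL ℝ X Y ℝ).flip T

/-!
Write `mₙ Λₙ* Θₙ g − m Λ* Θ g` termwise as
`(mₙ − m) Λₙ* Θₙ g + m (Λₙ − Λ)* Θₙ g + m Λ* (Θₙ − Θ) g`.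
The first series is a multiplier with symbol `mₙ − m`, whose sup-norm is at most `‖mₙ − m‖_{p₁}`,
so Hölder's inequality for the `p`/`q` Bessel pair bounds it by `B₁ B₂ ‖mₙ − m‖_{p₁} ‖g‖`.
The other two converge absolutely: Hölder's inequality for `p₁`/`q₁` bounds them by
`B₂ ‖m‖_{p₁} ‖Λₙ − Λ‖_{q₁} ‖g‖` and `B_Λ ‖m‖_{p₁} ‖Θₙ − Θ‖_{q₁} ‖g‖`.
Every constant tends to `0`.
-/

section Adjoint

variable {X Y : Type*} [NormedAddCommGroup X] [NormedSpace ℝ X]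
  [NormedAddCommGroup Y] [NormedSpace ℝ Y]

lemma opAdj_apply (T : X →L[ℝ] Y) (f : StrongDual ℝ Y) : opAdj T f = f.comp T := rfl

lemma opAdj_sub (S T : X →L[ℝ] Y) : opAdj (S - T) = opAdj S - opAdj T :=
  map_sub (ContinuousLinearMap.compL ℝ X Y ℝ).flip S T

lemma norm_opAdj_apply_le (T : X →L[ℝ] Y) (f : StrongDual ℝ Y) : ‖opAdj T f‖ ≤ ‖f‖ * ‖T‖ :=
  f.opNorm_comp_le T

end Adjoint

section RpowSum

variable {ι : Type*} {a : ι → ℝ} {p : ℝ}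

lemma le_tsum_rpow_rpow_one_div (hp : 0 < p) (ha : ∀ i, 0 ≤ a i)
    (hs : Summable fun i => a i ^ p) (i : ι) : a i ≤ (∑' j, a j ^ p) ^ (1 / p) := by
  calc a i = (a i ^ p) ^ (1 / p) := by rw [one_div, Real.rpow_rpow_inv (ha i) hp.ne']
    _ ≤ (∑' j, a j ^ p) ^ (1 / p) :=
      Real.rpow_le_rpow (Real.rpow_nonneg (ha i) p)
        (hs.le_tsum i fun j _ => Real.rpow_nonneg (ha j) p) (by positivity)

lemma sum_rpow_rpow_one_div_le_tsum (hp : 0 < p) (ha : ∀ i, 0 ≤ a i)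
    (hs : Summable fun i => a i ^ p) (t : Finset ι) :
    (∑ i ∈ t, a i ^ p) ^ (1 / p) ≤ (∑' i, a i ^ p) ^ (1 / p) := by
  have hnonneg : ∀ i, 0 ≤ a i ^ p := fun i => Real.rpow_nonneg (ha i) p
  exact Real.rpow_le_rpow (Finset.sum_nonneg fun i _ => hnonneg i)
    (hs.sum_le_tsum t fun i _ => hnonneg i) (by positivity)

end RpowSum

lemma summable_of_norm_sum_le_mul_rpow {ι E : Type*} [NormedAddCommGroup E] [CompleteSpace E]
    {f : ι → E} {c : ι → ℝ} (hc : Summable c) {K r : ℝ} (hr : 0 < r)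
    (h : ∀ t : Finset ι, ‖∑ i ∈ t, f i‖ ≤ K * (∑ i ∈ t, c i) ^ r) : Summable f := by
  have hlim : Tendsto (fun s : ℝ => K * s ^ r) (nhds 0) (nhds 0) := by
    simpa [Real.zero_rpow hr.ne'] using
      ((Real.continuousAt_rpow_const 0 r (Or.inr hr.le)).const_mul K).tendsto
  rw [summable_iff_vanishing_norm]
  intro ε hε
  obtain ⟨δ, hδ, hδε⟩ := Metric.tendsto_nhds_nhds.1 hlim ε hε
  obtain ⟨s, hs⟩ := summable_iff_vanishing_norm.1 hc δ hδ
  refine ⟨s, fun t ht => (h t).trans_lt ((le_abs_self _).trans_lt ?_)⟩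
  simpa using hδε (x := ∑ i ∈ t, c i) (by simpa using hs t ht)

lemma summable_and_norm_tsum_le_of_norm_le_mul {ι E : Type*} [NormedAddCommGroup E]
    [CompleteSpace E] {p q : ℝ} (hpq : p.HolderConjugate q) {f : ι → E} {a b : ι → ℝ}
    (ha : ∀ i, 0 ≤ a i) (hb : ∀ i, 0 ≤ b i) (has : Summable fun i => a i ^ p)
    (hbs : Summable fun i => b i ^ q) {K : ℝ} (hK : 0 ≤ K) (hf : ∀ i, ‖f i‖ ≤ K * (a i * b i)) :
    Summable f ∧
      ‖∑' i, f i‖ ≤ K * ((∑' i, a i ^ p) ^ (1 / p) * (∑' i, b i ^ q) ^ (1 / q)) := by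
  obtain ⟨hab, hHolder⟩ := Real.summable_and_inner_le_Lp_mul_Lq_tsum_of_nonneg hpq ha hb has hbs
  have hdom : Summable fun i => K * (a i * b i) := hab.mul_left K
  refine ⟨hdom.of_norm_bounded hf, (tsum_of_norm_bounded hdom.hasSum hf).trans ?_⟩
  rw [tsum_mul_left]
  gcongr

/-- The `pg-Bessel` sequences of the paper (`qg-Bessel` for the exponent `q`). -/
def IsPGBesselSeq {ι X : Type*} [NormedAddCommGroup X] {Y : ι → Type*}
    [∀ i, NormedAddCommGroup (Y i)] [NormedSpace ℝ X] [∀ i, NormedSpace ℝ (Y i)] (p : ℝ)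
    (Λ : ∀ i, X →L[ℝ] Y i) (B : ℝ) : Prop :=
  ∀ x, Summable (fun i => ‖Λ i x‖ ^ p) ∧ (∑' i, ‖Λ i x‖ ^ p) ^ (1 / p) ≤ B * ‖x‖

namespace IsPGBesselSeq

variable {ι X : Type*} [NormedAddCommGroup X] [NormedSpace ℝ X] {Y : ι → Type*}
  [∀ i, NormedAddCommGroup (Y i)] [∀ i, NormedSpace ℝ (Y i)]
  {p B : ℝ} {Λ : ∀ i, X →L[ℝ] Y i}

lemma norm_apply_le (hΛ : IsPGBesselSeq p Λ B) (hp : 0 < p) (i : ι) (x : X) :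
    ‖Λ i x‖ ≤ B * ‖x‖ :=
  (le_tsum_rpow_rpow_one_div hp (fun _ => norm_nonneg _) (hΛ x).1 i).trans (hΛ x).2

lemma norm_le (hΛ : IsPGBesselSeq p Λ B) (hp : 0 < p) (hB : 0 ≤ B) (i : ι) : ‖Λ i‖ ≤ B :=
  (Λ i).opNorm_le_bound hB (hΛ.norm_apply_le hp i)

lemma sum_rpow_rpow_one_div_le (hΛ : IsPGBesselSeq p Λ B) (hp : 0 < p) (t : Finset ι) (x : X) :
    (∑ i ∈ t, ‖Λ i x‖ ^ p) ^ (1 / p) ≤ B * ‖x‖ :=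
  (sum_rpow_rpow_one_div_le_tsum hp (fun _ => norm_nonneg _) (hΛ x).1 t).trans (hΛ x).2

end IsPGBesselSeq

section Multiplier

variable {ι X₁ X₂ : Type*} [NormedAddCommGroup X₁] [NormedSpace ℝ X₁]
  [NormedAddCommGroup X₂] [NormedSpace ℝ X₂] {Y : ι → Type*} [∀ i, NormedAddCommGroup (Y i)]
  [∀ i, NormedSpace ℝ (Y i)]

lemma norm_sum_smul_opAdj_le {p q : ℝ} (hpq : p.HolderConjugate q) {Λ : ∀ i, X₂ →L[ℝ] Y i}
    {B : ℝ} (hΛ : IsPGBesselSeq p Λ B) (hB : 0 ≤ B) {m : ι → ℝ} {M : ℝ} (hM : 0 ≤ M)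
    (hm : ∀ i, |m i| ≤ M) (h : ∀ i, StrongDual ℝ (Y i)) (t : Finset ι) :
    ‖∑ i ∈ t, m i • opAdj (Λ i) (h i)‖ ≤ M * B * (∑ i ∈ t, ‖h i‖ ^ q) ^ (1 / q) := by
  refine ContinuousLinearMap.opNorm_le_bound _ (by positivity) fun x => ?_
  have heval : (∑ i ∈ t, m i • opAdj (Λ i) (h i)) x = ∑ i ∈ t, m i * h i (Λ i x) := by
    simp [opAdj_apply]
  rw [heval, Real.norm_eq_abs]
  calc |∑ i ∈ t, m i * h i (Λ i x)| ≤ ∑ i ∈ t, M * (‖h i‖ * ‖Λ i x‖) := by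
        refine (Finset.abs_sum_le_sum_abs _ _).trans (Finset.sum_le_sum fun i _ => ?_)
        rw [abs_mul, ← Real.norm_eq_abs (h i _)]
        exact mul_le_mul (hm i) ((h i).le_opNorm _) (norm_nonneg _) hM
    _ ≤ M * ((∑ i ∈ t, ‖h i‖ ^ q) ^ (1 / q) * (∑ i ∈ t, ‖Λ i x‖ ^ p) ^ (1 / p)) := by
        rw [← Finset.mul_sum]
        gcongr
        exact Real.inner_le_Lp_mul_Lq_of_nonneg t hpq.symm (fun _ _ => norm_nonneg _)
          (fun _ _ => norm_nonneg _)
    _ ≤ M * ((∑ i ∈ t, ‖h i‖ ^ q) ^ (1 / q) * (B * ‖x‖)) := by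
        gcongr
        exact hΛ.sum_rpow_rpow_one_div_le hpq.pos t x
    _ = M * B * (∑ i ∈ t, ‖h i‖ ^ q) ^ (1 / q) * ‖x‖ := by ring

lemma summable_smul_opAdj_and_norm_tsum_le {p q : ℝ} (hpq : p.HolderConjugate q)
    {Λ : ∀ i, X₂ →L[ℝ] Y i} {B : ℝ} (hΛ : IsPGBesselSeq p Λ B) (hB : 0 ≤ B) {m : ι → ℝ}
    {M : ℝ} (hM : 0 ≤ M) (hm : ∀ i, |m i| ≤ M) {h : ∀ i, StrongDual ℝ (Y i)}
    (hh : Summable fun i => ‖h i‖ ^ q) :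
    Summable (fun i => m i • opAdj (Λ i) (h i)) ∧
      ‖∑' i, m i • opAdj (Λ i) (h i)‖ ≤ M * B * (∑' i, ‖h i‖ ^ q) ^ (1 / q) := by
  have hpartial := norm_sum_smul_opAdj_le hpq hΛ hB hM hm h
  have hS : Summable fun i => m i • opAdj (Λ i) (h i) :=
    summable_of_norm_sum_le_mul_rpow hh (by simpa using hpq.symm.pos) hpartial
  refine ⟨hS, le_of_tendsto' hS.hasSum.norm fun t => (hpartial t).trans ?_⟩
  exact mul_le_mul_of_nonneg_left
    (sum_rpow_rpow_one_div_le_tsum hpq.symm.pos (fun _ => norm_nonneg _) hh t) (by positivity)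

theorem IsPGBesselSeq.norm_smul_opAdj_apply_le {q B : ℝ}
    {Θ : ∀ i, StrongDual ℝ X₁ →L[ℝ] StrongDual ℝ (Y i)} (hΘ : IsPGBesselSeq q Θ B) (hq : 0 < q)
    {i : ι} (c : ℝ) (T : X₂ →L[ℝ] Y i) (g : StrongDual ℝ X₁) :
    ‖c • opAdj T (Θ i g)‖ ≤ B * ‖g‖ * (|c| * ‖T‖) := by
  have hΘg := hΘ.norm_apply_le hq i g
  calc ‖c • opAdj T (Θ i g)‖ ≤ |c| * (‖Θ i g‖ * ‖T‖) := by
        rw [norm_smul, Real.norm_eq_abs]; gcongr; exact norm_opAdj_apply_le _ _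
    _ ≤ |c| * (B * ‖g‖ * ‖T‖) := by gcongr
    _ = B * ‖g‖ * (|c| * ‖T‖) := by ring

theorem IsPGBesselSeq.norm_smul_opAdj_self_apply_le {p B : ℝ} {Λ : ∀ i, X₂ →L[ℝ] Y i}
    (hΛ : IsPGBesselSeq p Λ B) (hp : 0 < p) (hB : 0 ≤ B) {i : ι} (c : ℝ)
    (Φ : StrongDual ℝ X₁ →L[ℝ] StrongDual ℝ (Y i)) (g : StrongDual ℝ X₁) :
    ‖c • opAdj (Λ i) (Φ g)‖ ≤ B * ‖g‖ * (|c| * ‖Φ‖) := by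
  calc ‖c • opAdj (Λ i) (Φ g)‖ ≤ |c| * (‖Φ g‖ * ‖Λ i‖) := by
        rw [norm_smul, Real.norm_eq_abs]; gcongr; exact norm_opAdj_apply_le _ _
    _ ≤ |c| * (‖Φ‖ * ‖g‖ * B) :=
        mul_le_mul_of_nonneg_left
          (mul_le_mul (Φ.le_opNorm g) (hΛ.norm_le hp hB i) (norm_nonneg _) (by positivity))
          (abs_nonneg _)
    _ = B * ‖g‖ * (|c| * ‖Φ‖) := by ring

theorem norm_tsum_smul_opAdj_sub_le {p q p₁ q₁ : ℝ} (hpq : p.HolderConjugate q)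
    (hpq₁ : p₁.HolderConjugate q₁) {Λ Λ' : ∀ i, X₂ →L[ℝ] Y i}
    {Θ Θ' : ∀ i, StrongDual ℝ X₁ →L[ℝ] StrongDual ℝ (Y i)} {BΛ B₁ B₂ : ℝ}
    (hBΛ : 0 ≤ BΛ) (hB₁ : 0 ≤ B₁) (hB₂ : 0 ≤ B₂) (hΛ : IsPGBesselSeq p Λ BΛ)
    (hΛ' : IsPGBesselSeq p Λ' B₁) (hΘ' : IsPGBesselSeq q Θ' B₂) {m m' : ι → ℝ}
    (hm : Summable fun i => |m i| ^ p₁) (hmm' : Summable fun i => |m' i - m i| ^ p₁)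
    (hΛΛ' : Summable fun i => ‖Λ' i - Λ i‖ ^ q₁) (hΘΘ' : Summable fun i => ‖Θ' i - Θ i‖ ^ q₁)
    {g : StrongDual ℝ X₁} (hS : Summable fun i => m i • opAdj (Λ i) (Θ i g))
    (hS' : Summable fun i => m' i • opAdj (Λ' i) (Θ' i g)) :
    ‖(∑' i, m' i • opAdj (Λ' i) (Θ' i g)) - ∑' i, m i • opAdj (Λ i) (Θ i g)‖ ≤
      (B₁ * B₂ * (∑' i, |m' i - m i| ^ p₁) ^ (1 / p₁) +
        B₂ * (∑' i, |m i| ^ p₁) ^ (1 / p₁) * (∑' i, ‖Λ' i - Λ i‖ ^ q₁) ^ (1 / q₁) +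
        BΛ * (∑' i, |m i| ^ p₁) ^ (1 / p₁) * (∑' i, ‖Θ' i - Θ i‖ ^ q₁) ^ (1 / q₁)) * ‖g‖ := by
  set δm := (∑' i, |m' i - m i| ^ p₁) ^ (1 / p₁)
  have hδm : 0 ≤ δm := Real.rpow_nonneg (tsum_nonneg fun _ => by positivity) _
  obtain ⟨hT₁, hT₁_le⟩ := summable_smul_opAdj_and_norm_tsum_le hpq hΛ' hB₁ hδm
    (le_tsum_rpow_rpow_one_div hpq₁.pos (fun _ => abs_nonneg _) hmm') (hΘ' g).1
  obtain ⟨hT₂, hT₂_le⟩ := summable_and_norm_tsum_le_of_norm_le_mul hpq₁ (fun i => abs_nonneg (m i))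
    (fun i => norm_nonneg (Λ' i - Λ i)) hm hΛΛ' (mul_nonneg hB₂ (norm_nonneg g))
    fun i => hΘ'.norm_smul_opAdj_apply_le hpq.symm.pos (m i) (Λ' i - Λ i) g
  obtain ⟨hT₃, hT₃_le⟩ := summable_and_norm_tsum_le_of_norm_le_mul hpq₁ (fun i => abs_nonneg (m i))
    (fun i => norm_nonneg (Θ' i - Θ i)) hm hΘΘ' (mul_nonneg hBΛ (norm_nonneg g))
    fun i => hΛ.norm_smul_opAdj_self_apply_le hpq.pos hBΛ (m i) (Θ' i - Θ i) g
  have hsplit : (∑' i, m' i • opAdj (Λ' i) (Θ' i g)) - ∑' i, m i • opAdj (Λ i) (Θ i g) =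
      (∑' i, (m' i - m i) • opAdj (Λ' i) (Θ' i g)) +
        (∑' i, m i • opAdj (Λ' i - Λ i) (Θ' i g)) +
        ∑' i, m i • opAdj (Λ i) ((Θ' i - Θ i) g) := by
    rw [← hT₁.tsum_add hT₂, ← (hT₁.add hT₂).tsum_add hT₃, ← hS'.tsum_sub hS]
    congr 1 with i : 1
    rw [opAdj_sub, sub_apply, sub_apply, map_sub]
    module
  have hT₁_le' : ‖∑' i, (m' i - m i) • opAdj (Λ' i) (Θ' i g)‖ ≤ δm * B₁ * (B₂ * ‖g‖) :=
    hT₁_le.trans (mul_le_mul_of_nonneg_left (hΘ' g).2 (by positivity))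
  rw [hsplit]
  refine norm_add₃_le.trans ((add_le_add (add_le_add hT₁_le' hT₂_le) hT₃_le).trans_eq ?_)
  ring

end Multiplier

theorem multiplier_continuous_in_all_parameters_general
    {X₁ X₂ : Type*} [NormedAddCommGroup X₁] [NormedSpace ℝ X₁]
    [NormedAddCommGroup X₂] [NormedSpace ℝ X₂]
    {Y : ℕ → Type*} [∀ i, NormedAddCommGroup (Y i)] [∀ i, NormedSpace ℝ (Y i)]
    (p q : ℝ) (hp : 1 < p) (hpq : 1 / p + 1 / q = 1)
    (p₁ q₁ : ℝ) (hp₁ : 1 < p₁) (hpq₁ : 1 / p₁ + 1 / q₁ = 1)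
    (Λ : ∀ i, X₂ →L[ℝ] Y i) (Λn : ℕ → ∀ i, X₂ →L[ℝ] Y i)
    (Θ : ∀ i, StrongDual ℝ X₁ →L[ℝ] StrongDual ℝ (Y i))
    (Θn : ℕ → ∀ i, StrongDual ℝ X₁ →L[ℝ] StrongDual ℝ (Y i))
    (BΛ BΘ B₁ B₂ : ℝ) (hBΛ : 0 < BΛ) (hB₁ : 0 < B₁) (hB₂ : 0 < B₂)
    (hΛ : ∀ x : X₂, Summable (fun i => ‖Λ i x‖ ^ p) ∧
      (∑' i, ‖Λ i x‖ ^ p) ^ (1 / p) ≤ BΛ * ‖x‖)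
    (hΘ : ∀ g : StrongDual ℝ X₁, Summable (fun i => ‖Θ i g‖ ^ q) ∧
      (∑' i, ‖Θ i g‖ ^ q) ^ (1 / q) ≤ BΘ * ‖g‖)
    -- uniform Bessel bounds `B₁ = sup B_{Λ⁽ⁿ⁾}`, `B₂ = sup B_{Θ⁽ⁿ⁾}`
    (hΛn : ∀ n, ∀ x : X₂, Summable (fun i => ‖Λn n i x‖ ^ p) ∧
      (∑' i, ‖Λn n i x‖ ^ p) ^ (1 / p) ≤ B₁ * ‖x‖)
    (hΘn : ∀ n, ∀ g : StrongDual ℝ X₁, Summable (fun i => ‖Θn n i g‖ ^ q) ∧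
      (∑' i, ‖Θn n i g‖ ^ q) ^ (1 / q) ≤ B₂ * ‖g‖)
    (m : ℕ → ℝ) (mn : ℕ → ℕ → ℝ)
    (hm : Summable (fun i => |m i| ^ p₁)) (hmbd : ∃ M, ∀ i, |m i| ≤ M)
    (hmn : ∀ n, ∃ M, ∀ i, |mn n i| ≤ M)
    (hmdiffsum : ∀ n, Summable (fun i => |mn n i - m i| ^ p₁))
    (hmconv : Tendsto (fun n => (∑' i, |mn n i - m i| ^ p₁) ^ (1 / p₁))
      atTop (nhds 0))
    (hΛdiffsum : ∀ n, Summable (fun i => ‖Λn n i - Λ i‖ ^ q₁))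
    (hΛconv : Tendsto (fun n => (∑' i, ‖Λn n i - Λ i‖ ^ q₁) ^ (1 / q₁))
      atTop (nhds 0))
    (hΘdiffsum : ∀ n, Summable (fun i => ‖Θn n i - Θ i‖ ^ q₁))
    (hΘconv : Tendsto (fun n => (∑' i, ‖Θn n i - Θ i‖ ^ q₁) ^ (1 / q₁))
      atTop (nhds 0)) :
    ∃ C : ℕ → ℝ, Tendsto C atTop (nhds 0) ∧
      ∀ (n : ℕ) (g : StrongDual ℝ X₁),
        Summable (fun i => mn n i • opAdj (Λn n i) (Θn n i g)) ∧
        Summable (fun i => m i • opAdj (Λ i) (Θ i g)) ∧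
        ‖(∑' i, mn n i • opAdj (Λn n i) (Θn n i g)) -
            ∑' i, m i • opAdj (Λ i) (Θ i g)‖ ≤ C n * ‖g‖ := by
  have hpq' : p.HolderConjugate q :=
    Real.holderConjugate_iff.2 ⟨hp, by simpa only [one_div] using hpq⟩
  have hpq₁' : p₁.HolderConjugate q₁ :=
    Real.holderConjugate_iff.2 ⟨hp₁, by simpa only [one_div] using hpq₁⟩
  set Mp := (∑' i, |m i| ^ p₁) ^ (1 / p₁)
  refine ⟨fun n => B₁ * B₂ * (∑' i, |mn n i - m i| ^ p₁) ^ (1 / p₁) +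
      B₂ * Mp * (∑' i, ‖Λn n i - Λ i‖ ^ q₁) ^ (1 / q₁) +
      BΛ * Mp * (∑' i, ‖Θn n i - Θ i‖ ^ q₁) ^ (1 / q₁), ?_, fun n g => ?_⟩
  · simpa using ((hmconv.const_mul (B₁ * B₂)).add (hΛconv.const_mul (B₂ * Mp))).add
      (hΘconv.const_mul (BΛ * Mp))
  obtain ⟨M, hM⟩ := hmbd
  obtain ⟨Mn, hMn⟩ := hmn n
  have hS := (summable_smul_opAdj_and_norm_tsum_le hpq' hΛ hBΛ.le
    ((abs_nonneg _).trans (hM 0)) hM (hΘ g).1).1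
  have hSn := (summable_smul_opAdj_and_norm_tsum_le hpq' (hΛn n) hB₁.le
    ((abs_nonneg _).trans (hMn 0)) hMn (hΘn n g).1).1
  exact ⟨hSn, hS, norm_tsum_smul_opAdj_sub_le hpq' hpq₁' hBΛ.le hB₁.le hB₂.le hΛ (hΛn n)
    (hΘn n) hm (hmdiffsum n) (hΛdiffsum n) (hΘdiffsum n) hS hSn⟩

/-- joint continuity of the multiplier in all three parameters: if
`‖m⁽ⁿ⁾ − m‖_{p₁} → 0`, `m ∈ ℓ^{p₁}`, the pg-Bessel sequences `Λ⁽ⁿ⁾` (uniform bound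
`B₁`) converge to `Λ` and the qg-Bessel sequences `Θ⁽ⁿ⁾` (uniform bound `B₂`)
converge to `Θ` in the `ℓ^{q₁}` sense, then
`‖M_{m⁽ⁿ⁾,Λ⁽ⁿ⁾,Θ⁽ⁿ⁾} − M_{m,Λ,Θ}‖ → 0`. -/
theorem multiplier_continuous_in_all_parameters
    {X₁ X₂ : Type*} [NormedAddCommGroup X₁] [NormedSpace ℝ X₁] [CompleteSpace X₁]
    [NormedAddCommGroup X₂] [NormedSpace ℝ X₂] [CompleteSpace X₂]
    {Y : ℕ → Type*} [∀ i, NormedAddCommGroup (Y i)] [∀ i, NormedSpace ℝ (Y i)]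
    [∀ i, CompleteSpace (Y i)]
    (hreflX₁ : Function.Surjective (inclusionInDoubleDual ℝ X₁))
    (hreflX₂ : Function.Surjective (inclusionInDoubleDual ℝ X₂))
    (hreflY : ∀ i, Function.Surjective (inclusionInDoubleDual ℝ (Y i)))
    (p q : ℝ) (hp : 1 < p) (hpq : 1 / p + 1 / q = 1)
    (p₁ q₁ : ℝ) (hp₁ : 1 < p₁) (hpq₁ : 1 / p₁ + 1 / q₁ = 1)
    (Λ : ∀ i, X₂ →L[ℝ] Y i) (Λn : ℕ → ∀ i, X₂ →L[ℝ] Y i)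
    (Θ : ∀ i, StrongDual ℝ X₁ →L[ℝ] StrongDual ℝ (Y i))
    (Θn : ℕ → ∀ i, StrongDual ℝ X₁ →L[ℝ] StrongDual ℝ (Y i))
    (BΛ BΘ B₁ B₂ : ℝ) (hBΛ : 0 < BΛ) (hBΘ : 0 < BΘ) (hB₁ : 0 < B₁) (hB₂ : 0 < B₂)
    (hΛ : ∀ x : X₂, Summable (fun i => ‖Λ i x‖ ^ p) ∧
      (∑' i, ‖Λ i x‖ ^ p) ^ (1 / p) ≤ BΛ * ‖x‖)
    (hΘ : ∀ g : StrongDual ℝ X₁, Summable (fun i => ‖Θ i g‖ ^ q) ∧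
      (∑' i, ‖Θ i g‖ ^ q) ^ (1 / q) ≤ BΘ * ‖g‖)
    -- uniform Bessel bounds `B₁ = sup B_{Λ⁽ⁿ⁾}`, `B₂ = sup B_{Θ⁽ⁿ⁾}`
    (hΛn : ∀ n, ∀ x : X₂, Summable (fun i => ‖Λn n i x‖ ^ p) ∧
      (∑' i, ‖Λn n i x‖ ^ p) ^ (1 / p) ≤ B₁ * ‖x‖)
    (hΘn : ∀ n, ∀ g : StrongDual ℝ X₁, Summable (fun i => ‖Θn n i g‖ ^ q) ∧
      (∑' i, ‖Θn n i g‖ ^ q) ^ (1 / q) ≤ B₂ * ‖g‖)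
    (m : ℕ → ℝ) (mn : ℕ → ℕ → ℝ)
    (hm : Summable (fun i => |m i| ^ p₁)) (hmbd : ∃ M, ∀ i, |m i| ≤ M)
    (hmn : ∀ n, ∃ M, ∀ i, |mn n i| ≤ M)
    (hmdiffsum : ∀ n, Summable (fun i => |mn n i - m i| ^ p₁))
    (hmconv : Tendsto (fun n => (∑' i, |mn n i - m i| ^ p₁) ^ (1 / p₁))
      atTop (nhds 0))
    (hΛdiffsum : ∀ n, Summable (fun i => ‖Λn n i - Λ i‖ ^ q₁))
    (hΛconv : Tendsto (fun n => (∑' i, ‖Λn n i - Λ i‖ ^ q₁) ^ (1 / q₁))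
      atTop (nhds 0))
    (hΘdiffsum : ∀ n, Summable (fun i => ‖Θn n i - Θ i‖ ^ q₁))
    (hΘconv : Tendsto (fun n => (∑' i, ‖Θn n i - Θ i‖ ^ q₁) ^ (1 / q₁))
      atTop (nhds 0)) :
    ∃ C : ℕ → ℝ, Tendsto C atTop (nhds 0) ∧
      ∀ (n : ℕ) (g : StrongDual ℝ X₁),
        Summable (fun i => mn n i • opAdj (Λn n i) (Θn n i g)) ∧
        Summable (fun i => m i • opAdj (Λ i) (Θ i g)) ∧
        ‖(∑' i, mn n i • opAdj (Λn n i) (Θn n i g)) -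
            ∑' i, m i • opAdj (Λ i) (Θ i g)‖ ≤ C n * ‖g‖ :=
  multiplier_continuous_in_all_parameters_general p q hp hpq p₁ q₁ hp₁ hpq₁ Λ Λn Θ Θn BΛ BΘ B₁ B₂
    hBΛ hB₁ hB₂ hΛ hΘ hΛn hΘn m mn hm hmbd hmn hmdiffsum hmconv hΛdiffsum hΛconv hΘdiffsum hΘconv
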